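/- Let 0 < m < n be integers of the form n = 2lν, m = 2lμ with 0 < μ < ν coprime, and t_1 = π/(2n). Then |Ψ(π/2, t_1)| = |sin(2lμ t_1)| (1/sin²(π/4 − t_1/2) + 1/sin²(π/4 + t_1/2)) ≥ C for a constant C > 0 independent of l, where Ψ(t,s) = sin(m(t−s))/sin²((t−s)/2) − sin(m(t+s))/sin²((t+s)/2). -/

import Mathlib

open Real

/-! For even `m`, `x ↦ sin (m x)` is odd about `π/2`, so the two terms of `Ψ(π/2, t)` share the
numerator `sin (m (π/2 - t)) = ± sin (m t)` and `Ψ(π/2, t)` factors as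
`± sin (m t) (1/sin²(π/4 - t/2) + 1/sin²(π/4 + t/2))`. The bracket is at least `1` for `|t| < π/2`,
and with `t = π/(2n)` we have `m t = μπ/(2ν)`, independent of `l`. -/

/-- `Ψ(t,s) = sin(m(t-s))/sin²((t-s)/2) − sin(m(t+s))/sin²((t+s)/2)`. -/
noncomputable def vpPsi (m : ℕ) (t s : ℝ) : ℝ :=
  Real.sin (m * (t - s)) / Real.sin ((t - s) / 2) ^ 2
    - Real.sin (m * (t + s)) / Real.sin ((t + s) / 2) ^ 2

lemma sin_mul_pi_div_two_add_of_even {m : ℕ} (hm : Even m) (t : ℝ) :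
    sin (m * (π / 2 + t)) = -sin (m * (π / 2 - t)) := by
  obtain ⟨k, rfl⟩ := hm
  have hadd : ((k + k : ℕ) : ℝ) * (π / 2 + t) = (k + k : ℕ) * t + k * π := by push_cast; ring
  have hsub : ((k + k : ℕ) : ℝ) * (π / 2 - t) = k * π - (k + k : ℕ) * t := by push_cast; ring
  rw [hadd, hsub, sin_add_nat_mul_pi, sin_nat_mul_pi_sub, neg_neg]

lemma abs_sin_mul_pi_div_two_sub_of_even {m : ℕ} (hm : Even m) (t : ℝ) :
    |sin (m * (π / 2 - t))| = |sin (m * t)| := by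
  obtain ⟨k, rfl⟩ := hm
  have hsub : ((k + k : ℕ) : ℝ) * (π / 2 - t) = k * π - (k + k : ℕ) * t := by push_cast; ring
  rw [hsub, sin_nat_mul_pi_sub, abs_neg, abs_mul, abs_pow, abs_neg, abs_one, one_pow, one_mul]

lemma vpPsi_pi_div_two_of_even {m : ℕ} (hm : Even m) (t : ℝ) :
    vpPsi m (π / 2) t =
      sin (m * (π / 2 - t)) * (1 / sin (π / 4 - t / 2) ^ 2 + 1 / sin (π / 4 + t / 2) ^ 2) := by
  have hsub : (π / 2 - t) / 2 = π / 4 - t / 2 := by ring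
  have hadd : (π / 2 + t) / 2 = π / 4 + t / 2 := by ring
  rw [vpPsi, sin_mul_pi_div_two_add_of_even hm, hsub, hadd]
  ring

lemma abs_vpPsi_pi_div_two_of_even {m : ℕ} (hm : Even m) (t : ℝ) :
    |vpPsi m (π / 2) t| =
      |sin (m * t)| * (1 / sin (π / 4 - t / 2) ^ 2 + 1 / sin (π / 4 + t / 2) ^ 2) := by
  have hbracket : 0 ≤ 1 / sin (π / 4 - t / 2) ^ 2 + 1 / sin (π / 4 + t / 2) ^ 2 := by positivity
  rw [vpPsi_pi_div_two_of_even hm, abs_mul, abs_sin_mul_pi_div_two_sub_of_even hm,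
    abs_of_nonneg hbracket]

lemma one_le_one_div_sin_sq {x : ℝ} (hx : sin x ≠ 0) : 1 ≤ 1 / sin x ^ 2 := by
  rw [le_div_iff₀ (by positivity), one_mul, sq_le_one_iff_abs_le_one]
  exact abs_sin_le_one x

lemma abs_sin_mul_le_abs_vpPsi_pi_div_two {m : ℕ} (hm : Even m) {t : ℝ} (ht : |t| < π / 2) :
    |sin (m * t)| ≤ |vpPsi m (π / 2) t| := by
  obtain ⟨ht₀, ht₁⟩ := abs_lt.mp ht
  have hsin : sin (π / 4 - t / 2) ≠ 0 :=
    (sin_pos_of_pos_of_lt_pi (by linarith) (by linarith [pi_pos])).ne'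
  have hbracket : 1 ≤ 1 / sin (π / 4 - t / 2) ^ 2 + 1 / sin (π / 4 + t / 2) ^ 2 := by
    linarith [one_le_one_div_sin_sq hsin, (by positivity : 0 ≤ 1 / sin (π / 4 + t / 2) ^ 2)]
  rw [abs_vpPsi_pi_div_two_of_even hm]
  exact le_mul_of_one_le_right (abs_nonneg _) hbracket

theorem stmt_18_general (μ ν : ℕ) (hμ : 0 < μ) (hμν : μ < ν) :
    ∃ C : ℝ, 0 < C ∧ ∀ l : ℕ, 1 ≤ l →
      |vpPsi (2 * l * μ) (π / 2) (π / (2 * ((2 * l * ν : ℕ) : ℝ)))| =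
        |Real.sin (2 * l * μ * (π / (2 * ((2 * l * ν : ℕ) : ℝ))))| *
          (1 / Real.sin (π / 4 - π / (2 * ((2 * l * ν : ℕ) : ℝ)) / 2) ^ 2
            + 1 / Real.sin (π / 4 + π / (2 * ((2 * l * ν : ℕ) : ℝ)) / 2) ^ 2) ∧
      C ≤ |vpPsi (2 * l * μ) (π / 2) (π / (2 * ((2 * l * ν : ℕ) : ℝ)))| := by
  have hμν' : (μ : ℝ) < ν := by exact_mod_cast hμν
  have hμ' : (0 : ℝ) < μ := by exact_mod_cast hμ
  have hC : 0 < sin (μ * π / (2 * ν)) := by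
    have hν' : (0 : ℝ) < ν := hμ'.trans hμν'
    refine sin_pos_of_pos_of_lt_pi (by positivity) ?_
    rw [div_lt_iff₀ (by positivity)]
    nlinarith [pi_pos]
  refine ⟨_, hC, fun l hl => ?_⟩
  have heven : Even (2 * l * μ) := (even_two_mul l).mul_right μ
  have hn : (1 : ℝ) < ((2 * l * ν : ℕ) : ℝ) := by exact_mod_cast (by nlinarith : 1 < 2 * l * ν)
  set t := π / (2 * ((2 * l * ν : ℕ) : ℝ))
  have ht : |t| < π / 2 := by
    rw [abs_of_pos (by positivity)]
    exact div_lt_div_of_pos_left pi_pos two_pos (by linarith)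
  have hmt : ((2 * l * μ : ℕ) : ℝ) * t = μ * π / (2 * ν) := by
    have hl₀ : (l : ℝ) ≠ 0 := by positivity
    simp only [t]
    push_cast
    field_simp
  have hcast : ((2 * l * μ : ℕ) : ℝ) = 2 * l * μ := by push_cast; ring
  refine ⟨hcast ▸ abs_vpPsi_pi_div_two_of_even heven t, ?_⟩
  calc sin (μ * π / (2 * ν)) = |sin (((2 * l * μ : ℕ) : ℝ) * t)| := by rw [hmt, abs_of_pos hC]
    _ ≤ _ := abs_sin_mul_le_abs_vpPsi_pi_div_two heven ht

/-- for `n = 2lν`, `m = 2lμ` (`0 < μ < ν` coprime) and `t₁ = π/(2n)`,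
`|Ψ(π/2, t₁)| = |sin(2lμ t₁)| (1/sin²(π/4 - t₁/2) + 1/sin²(π/4 + t₁/2)) ≥ C`
with `C > 0` independent of `l`. -/
theorem stmt_18 (μ ν : ℕ) (hμ : 0 < μ) (hμν : μ < ν) (hcop : Nat.Coprime μ ν) :
    ∃ C : ℝ, 0 < C ∧ ∀ l : ℕ, 1 ≤ l →
      |vpPsi (2 * l * μ) (π / 2) (π / (2 * ((2 * l * ν : ℕ) : ℝ)))| =
        |Real.sin (2 * l * μ * (π / (2 * ((2 * l * ν : ℕ) : ℝ))))| *
          (1 / Real.sin (π / 4 - π / (2 * ((2 * l * ν : ℕ) : ℝ)) / 2) ^ 2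
            + 1 / Real.sin (π / 4 + π / (2 * ((2 * l * ν : ℕ) : ℝ)) / 2) ^ 2) ∧
      C ≤ |vpPsi (2 * l * μ) (π / 2) (π / (2 * ((2 * l * ν : ℕ) : ℝ)))| :=
  stmt_18_general μ ν hμ hμν
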